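/- arXiv:2101.12186 — 2 statements merged into one kernel-verified Lean document; each statement's English description precedes it below -/
import Mathlib

section
/- Let L be a unimodular integral lattice (free abelian group of finite rank with a unimodular symmetric bilinear form), and let V, W be primitive, mutually orthogonal sublattices of L. Then there is a canonical isomorphism W^⊥/V ≅ (V^⊥/W)^*, where W^⊥ denotes the orthogonal complement of W in L, and ^* denotes the dual abelian group Hom(−, ℤ). -/
section Aux

variable {L : Type*} [AddCommGroup L]

/-- If `N` is a saturated submodule, the quotient has no zero smul divisors. -/
lemma aux_noZero (N : Submodule ℤ L)
    (hN : ∀ (n : ℤ) (x : L), n ≠ 0 → n • x ∈ N → x ∈ N) :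
    NoZeroSMulDivisors ℤ (L ⧸ N) := by
  refine ⟨fun {n y} h => ?_⟩
  by_contra hc
  push_neg at hc
  obtain ⟨z, rfl⟩ := N.mkQ_surjective y
  have h1 : N.mkQ (n • z) = 0 := by simpa using h
  rw [Submodule.mkQ_apply, Submodule.Quotient.mk_eq_zero] at h1
  have h2 : z ∈ N := hN n z hc.1 h1
  exact hc.2 (by rwa [Submodule.mkQ_apply, Submodule.Quotient.mk_eq_zero])

/-- Separation lemma: if `x ∉ N` for a saturated submodule `N` in a f.g. free
module over `ℤ`, then some integral functional vanishes on `N` but not on `x`. -/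
lemma aux_sep [Module.Free ℤ L] [Module.Finite ℤ L] (N : Submodule ℤ L)
    (hN : ∀ (n : ℤ) (x : L), n ≠ 0 → n • x ∈ N → x ∈ N) (x : L) (hx : x ∉ N) :
    ∃ f : L →ₗ[ℤ] ℤ, (∀ v ∈ N, f v = 0) ∧ f x ≠ 0 := by
  have := aux_noZero N hN
  have hfree : Module.Free ℤ (L ⧸ N) := inferInstance
  set b := hfree.chooseBasis with hb
  have hy : N.mkQ x ≠ 0 := by
    rw [Submodule.mkQ_apply, Ne, Submodule.Quotient.mk_eq_zero]; exact hx
  have : ∃ i, b.repr (N.mkQ x) i ≠ 0 := by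
    by_contra hc
    push_neg at hc
    apply hy
    have : b.repr (N.mkQ x) = 0 := Finsupp.ext fun i => hc i
    simpa using congrArg b.repr.symm this
  obtain ⟨i, hi⟩ := this
  refine ⟨(b.coord i).comp N.mkQ, fun v hv => ?_, ?_⟩
  · have : N.mkQ v = 0 := by
      rw [Submodule.mkQ_apply, Submodule.Quotient.mk_eq_zero]; exact hv
    simp [this]
  · simpa [Module.Basis.coord_apply] using hi

/-- Extension lemma: a functional on a saturated submodule of a f.g. free `ℤ`-module
extends to the whole module. -/
lemma aux_ext [Module.Free ℤ L] [Module.Finite ℤ L] (N : Submodule ℤ L)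
    (hN : ∀ (n : ℤ) (x : L), n ≠ 0 → n • x ∈ N → x ∈ N) (f : N →ₗ[ℤ] ℤ) :
    ∃ F : L →ₗ[ℤ] ℤ, ∀ n : N, F (n : L) = f n := by
  have := aux_noZero N hN
  obtain ⟨s, hs⟩ := Module.projective_lifting_property N.mkQ (LinearMap.id)
    N.mkQ_surjective
  have hsec : ∀ y : L ⧸ N, N.mkQ (s y) = y := fun y => LinearMap.congr_fun hs y
  have hmem : ∀ x : L, x - s (N.mkQ x) ∈ N := by
    intro x
    have h0 : N.mkQ (x - s (N.mkQ x)) = 0 := by rw [map_sub, hsec, sub_self]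
    rwa [Submodule.mkQ_apply, Submodule.Quotient.mk_eq_zero] at h0
  let r : L →ₗ[ℤ] N :=
    { toFun := fun x => ⟨x - s (N.mkQ x), hmem x⟩
      map_add' := fun a b => by ext; simp; abel
      map_smul' := fun c a => by ext; simp [smul_sub] }
  refine ⟨f.comp r, fun n => ?_⟩
  have : r (n : L) = n := by
    ext
    have h0 : N.mkQ (n : L) = 0 := by
      rw [Submodule.mkQ_apply, Submodule.Quotient.mk_eq_zero]; exact n.2
    show (n : L) - s (N.mkQ (n : L)) = n
    rw [h0, map_zero, sub_zero]
  simp [this]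

end Aux

/-- Let `L` be a unimodular integral lattice and `V`, `W` primitive,
mutually orthogonal sublattices. Then there is a canonical isomorphism
`W^⊥/V ≅ (V^⊥/W)^*`, induced by the bilinear form. -/
theorem stmt_0
    (L : Type*) [AddCommGroup L] [Module.Free ℤ L] [Module.Finite ℤ L]
    (B : L →ₗ[ℤ] L →ₗ[ℤ] ℤ)
    (hsymm : ∀ x y : L, B x y = B y x)
    (hunimod : Function.Bijective fun x : L => B x)
    (V W : Submodule ℤ L)
    (hVprim : ∀ (n : ℤ) (x : L), n ≠ 0 → n • x ∈ V → x ∈ V)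
    (hWprim : ∀ (n : ℤ) (x : L), n ≠ 0 → n • x ∈ W → x ∈ W)
    (horth : ∀ v ∈ V, ∀ w ∈ W, B v w = 0) :
    ∃ φ : (↥(LinearMap.BilinForm.orthogonal B W) ⧸
            (V.comap (LinearMap.BilinForm.orthogonal B W).subtype)) ≃ₗ[ℤ]
          Module.Dual ℤ (↥(LinearMap.BilinForm.orthogonal B V) ⧸
            (W.comap (LinearMap.BilinForm.orthogonal B V).subtype)),
      ∀ (x : ↥(LinearMap.BilinForm.orthogonal B W))
        (y : ↥(LinearMap.BilinForm.orthogonal B V)),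
        φ (Submodule.Quotient.mk x) (Submodule.Quotient.mk y) = B (x : L) (y : L) := by
  classical
  set WO := LinearMap.BilinForm.orthogonal B W with hWO
  set VO := LinearMap.BilinForm.orthogonal B V with hVO
  set V' := V.comap WO.subtype with hV'
  set W' := W.comap VO.subtype with hW'
  -- membership characterizations
  have memWO : ∀ z : L, z ∈ WO ↔ ∀ w ∈ W, B w z = 0 := fun z => Iff.rfl
  have memVO : ∀ z : L, z ∈ VO ↔ ∀ v ∈ V, B v z = 0 := fun z => Iff.rfl
  -- VO is saturated
  have hVOsat : ∀ (n : ℤ) (x : L), n ≠ 0 → n • x ∈ VO → x ∈ VO := by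
    intro n x hn hx v hv
    have := hx v hv
    simp only [LinearMap.BilinForm.IsOrtho, map_smul, smul_eq_mul] at this ⊢
    rcases mul_eq_zero.mp this with h | h
    · exact absurd h hn
    · exact h
  -- the bilinear pairing restricted
  set b2 : WO →ₗ[ℤ] VO →ₗ[ℤ] ℤ := B.domRestrict₁₂ WO VO with hb2
  have hb2apply : ∀ (x : WO) (y : VO), b2 x y = B (x : L) (y : L) := fun _ _ => rfl
  -- each b2 x vanishes on W'
  have hvan : ∀ x : WO, W' ≤ LinearMap.ker (b2 x) := by
    intro x y hy
    simp only [LinearMap.mem_ker, hb2apply]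
    rw [hsymm]
    exact x.2 (y : L) hy
  -- the map Ψ : WO → Dual (VO ⧸ W')
  set Ψ : WO →ₗ[ℤ] Module.Dual ℤ (VO ⧸ W') :=
    { toFun := fun x => W'.liftQ (b2 x) (hvan x)
      map_add' := fun x y => by
        refine LinearMap.ext fun z => ?_
        obtain ⟨z, rfl⟩ := W'.mkQ_surjective z
        simp
      map_smul' := fun c x => by
        refine LinearMap.ext fun z => ?_
        obtain ⟨z, rfl⟩ := W'.mkQ_surjective z
        simp } with hΨ
  have hΨapply : ∀ (x : WO) (y : VO), Ψ x (Submodule.Quotient.mk y) = B (x : L) (y : L) :=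
    fun x y => rfl
  -- kernel computation
  have hker_ge : V' ≤ LinearMap.ker Ψ := by
    intro x hx
    simp only [LinearMap.mem_ker]
    refine LinearMap.ext fun z => ?_
    obtain ⟨z, rfl⟩ := W'.mkQ_surjective z
    have : z.1 ∈ VO := z.2
    simpa [hΨapply] using this x.1 hx
  have hker_le : LinearMap.ker Ψ ≤ V' := by
    intro x hx
    simp only [LinearMap.mem_ker] at hx
    by_contra hxV
    have hxV : (x : L) ∉ V := hxV
    obtain ⟨f, hf0, hfx⟩ := aux_sep V hVprim (x : L) hxV
    obtain ⟨z, hz0⟩ := hunimod.2 f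
    have hz : B z = f := hz0
    have hzVO : z ∈ VO := by
      intro v hv
      have : B z v = f v := by rw [hz]
      simpa [LinearMap.BilinForm.IsOrtho, hsymm v z, this] using hf0 v hv
    apply hfx
    have := congrFun (congrArg DFunLike.coe hx) (Submodule.Quotient.mk ⟨z, hzVO⟩)
    rw [hΨapply] at this
    simp only [LinearMap.zero_apply] at this
    calc f (x : L) = B z (x : L) := by rw [hz]
      _ = B (x : L) z := hsymm z x
      _ = 0 := this
  -- descend to the quotient
  set φ₀ : (WO ⧸ V') →ₗ[ℤ] Module.Dual ℤ (VO ⧸ W') := V'.liftQ Ψ hker_ge with hφ₀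
  have hφ₀apply : ∀ (x : WO) (y : VO),
      φ₀ (Submodule.Quotient.mk x) (Submodule.Quotient.mk y) = B (x : L) (y : L) :=
    fun x y => rfl
  have hinj : Function.Injective φ₀ := by
    rw [← LinearMap.ker_eq_bot, Submodule.ker_liftQ_eq_bot]
    exact hker_le
  have hsurj : Function.Surjective φ₀ := by
    intro g
    set g₀ : VO →ₗ[ℤ] ℤ := g.comp W'.mkQ with hg₀
    obtain ⟨F, hF⟩ := aux_ext VO hVOsat g₀
    obtain ⟨z, hzB0⟩ := hunimod.2 F
    have hzB : B z = F := hzB0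
    have hzWO : z ∈ WO := by
      intro w hw
      have hwVO : w ∈ VO := fun v hv => horth v hv w hw
      have h1 : B z w = F w := by rw [hzB]
      have h2 : F w = g₀ ⟨w, hwVO⟩ := hF ⟨w, hwVO⟩
      have h3 : g₀ ⟨w, hwVO⟩ = 0 := by
        have : (⟨w, hwVO⟩ : VO) ∈ W' := hw
        simp only [hg₀, LinearMap.comp_apply, Submodule.mkQ_apply]
        rw [(Submodule.Quotient.mk_eq_zero _).mpr this, map_zero]
      show B w z = 0
      rw [hsymm w z, h1, h2, h3]
    refine ⟨Submodule.Quotient.mk ⟨z, hzWO⟩, ?_⟩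
    refine LinearMap.ext fun q => ?_
    obtain ⟨y, rfl⟩ := W'.mkQ_surjective q
    have : φ₀ (Submodule.Quotient.mk ⟨z, hzWO⟩) (Submodule.Quotient.mk y) = B z (y : L) :=
      hφ₀apply ⟨z, hzWO⟩ y
    rw [Submodule.mkQ_apply, this, hzB]
    exact hF y
  exact ⟨LinearEquiv.ofBijective φ₀ ⟨hinj, hsurj⟩, fun x y => hφ₀apply x y⟩
end

section
/- Let Γ be a finite graph which is the 1-skeleton of a triangulation of the 2-sphere, with vertex set V, and suppose rational numbers c_i (i ∈ V) are given with c_1 = 0 for a fixed vertex 1. Suppose that for every edge {i,j} of the triangulation with two adjacent triangles {i,j,ℓ} and {i,j,r}, the quantity c_i + c_j − c_ℓ − c_r is an integer, and for a nonempty set of 'charged' vertices i it additionally holds that c_i − c_j ∈ ℤ for every neighbor j of i; assume moreover at least one charged vertex exists and the graph is connected via triangles (any two triangles are connected through shared edges). If one triangle has all three c-values in ℤ, then all c_i ∈ ℤ. -/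
lemma sum_int_aux {V : Type*} [DecidableEq V] (c : V → ℚ) (s : Finset V)
    (h : ∀ x ∈ s, ∃ m : ℤ, c x = (m : ℚ)) : ∃ m : ℤ, (∑ x ∈ s, c x) = (m : ℚ) := by
  classical
  induction s using Finset.induction_on with
  | empty => exact ⟨0, by simp⟩
  | @insert a s ha ih =>
    obtain ⟨m1, hm1⟩ := h a (Finset.mem_insert_self a s)
    obtain ⟨m2, hm2⟩ := ih (fun x hx => h x (Finset.mem_insert_of_mem hx))
    exact ⟨m1 + m2, by rw [Finset.sum_insert ha, hm1, hm2]; push_cast; ring⟩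

/-- Let `T` be the set of triangles of a triangulation of `S²` with vertex
set `V` (every triangle has 3 vertices, every vertex lies in a triangle, each edge lies in
exactly two triangles, and the dual graph is connected). Let `c : V → ℚ` with `c v₀ = 0` for
a fixed vertex. Suppose for every pair of adjacent triangles `t₁ = {i,j,ℓ}`, `t₂ = {i,j,r}`
the quantity `c_i + c_j − c_ℓ − c_r = 2 Σ_{t₁∩t₂} c − Σ_{t₁} c − Σ_{t₂} c` is an integer,
and for each vertex `i` of a nonempty set of charged vertices `c_i − c_j ∈ ℤ` for every
neighbor `j`. If one triangle has all three `c`-values in `ℤ`, then all `c_i ∈ ℤ`. -/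
theorem stmt_13
    (V : Type*) [Fintype V] [DecidableEq V]
    (T : Finset (Finset V))
    (htri : ∀ t ∈ T, t.card = 3)
    (hcover : ∀ v : V, ∃ t ∈ T, v ∈ t)
    (htwo : ∀ t ∈ T, ∀ e ⊆ t, e.card = 2 →
      ∃! t' : Finset V, t' ∈ T ∧ t' ≠ t ∧ e ⊆ t')
    (hconn : ∀ t₁ ∈ T, ∀ t₂ ∈ T,
      Relation.ReflTransGen (fun a b => a ∈ T ∧ b ∈ T ∧ (a ∩ b).card = 2) t₁ t₂)
    (c : V → ℚ) (v₀ : V) (hv₀ : c v₀ = 0)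
    (hedge : ∀ t₁ ∈ T, ∀ t₂ ∈ T, t₁ ≠ t₂ → (t₁ ∩ t₂).card = 2 →
      ∃ m : ℤ, 2 * (∑ x ∈ t₁ ∩ t₂, c x) - (∑ x ∈ t₁, c x) - (∑ x ∈ t₂, c x) = (m : ℚ))
    (Ch : Finset V) (hCh : Ch.Nonempty)
    (hcharged : ∀ i ∈ Ch, ∀ j : V, (∃ t ∈ T, i ∈ t ∧ j ∈ t ∧ i ≠ j) →
      ∃ m : ℤ, c i - c j = (m : ℚ))
    (t₀ : Finset V) (ht₀ : t₀ ∈ T) (hint : ∀ x ∈ t₀, ∃ m : ℤ, c x = (m : ℚ)) :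
    ∀ i : V, ∃ m : ℤ, c i = (m : ℚ) := by

  -- Step: integrality propagates across an adjacent triangle.
  have step : ∀ a b : Finset V, (a ∈ T ∧ b ∈ T ∧ (a ∩ b).card = 2) →
      (∀ x ∈ a, ∃ m : ℤ, c x = (m : ℚ)) → ∀ x ∈ b, ∃ m : ℤ, c x = (m : ℚ) := by
    intro a b ⟨ha, hb, hcard⟩ hPa
    have hne : a ≠ b := by
      intro h; subst h
      simp only [Finset.inter_self] at hcard
      rw [htri a ha] at hcard; omega
    obtain ⟨m, hm⟩ := hedge a ha b hb hne hcard
    -- sums over a and over a ∩ b are integers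
    obtain ⟨ma, hma⟩ := sum_int_aux c a hPa
    obtain ⟨mi, hmi⟩ := sum_int_aux c (a ∩ b)
      (fun x hx => hPa x (Finset.inter_subset_left hx))
    have hsumb : (∑ x ∈ b, c x) = ((2 * mi - ma - m : ℤ) : ℚ) := by
      push_cast; rw [← hmi, ← hma]; linarith
    -- b \ a is a singleton
    have hdiff : (b \ a).card = 1 := by
      have h1 : (b ∩ a).card = 2 := by rwa [Finset.inter_comm]
      have h2 := Finset.card_inter_add_card_sdiff b a
      rw [h1, htri b hb] at h2; omega
    obtain ⟨r, hr⟩ := Finset.card_eq_one.mp hdiff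
    have hsplit : (∑ x ∈ b ∩ a, c x) + (∑ x ∈ b \ a, c x) = ∑ x ∈ b, c x :=
      Finset.sum_inter_add_sum_sdiff b a c
    have hcr : c r = ((2 * mi - ma - m : ℤ) - mi : ℚ) := by
      rw [hr, Finset.sum_singleton] at hsplit
      rw [Finset.inter_comm, hmi] at hsplit
      push_cast
      push_cast at hsumb
      linarith [hsplit, hsumb]
    intro x hx
    by_cases hxa : x ∈ a
    · exact hPa x hxa
    · have : x ∈ b \ a := Finset.mem_sdiff.mpr ⟨hx, hxa⟩
      rw [hr, Finset.mem_singleton] at this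
      subst this
      exact ⟨2 * mi - ma - m - mi, by rw [hcr]; push_cast; ring⟩
  -- Propagate along the dual-graph connectivity.
  have key : ∀ t ∈ T, ∀ x ∈ t, ∃ m : ℤ, c x = (m : ℚ) := by
    intro t ht
    have h := hconn t₀ ht₀ t ht
    clear ht
    induction h with
    | refl => exact hint
    | tail _ hab ih => exact step _ _ hab ih
  intro i
  obtain ⟨t, ht, hit⟩ := hcover i
  exact key t ht i hit
end
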